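/- arXiv:2504.07672 — 2 statements merged into one kernel-verified Lean document; each statement's English description precedes it below -/
import Mathlib

section
/- Joint generating function of a split Skellam process: let S be a generalized Skellam process with jump set I ⊂ ℤ \ {0} and mean functions Λ_i, where each jump X of size i is split into sgn(X)Y and sgn(X)(|X|−Y) with Y having conditional law q(·; i) on {0,...,|i|}. Then the joint probability generating function of the two component processes is G_t(u,v) = exp(−Σ_{i∈I} Λ_i(t)(1 − E[u^{sgn(X)Y} v^{X − sgn(X)Y} | X = i])). -/
/-!
Put `c i j = u ^ (sgn i * j) * v ^ (i - sgn i * j)`, so that the integrand `u ^ S₁ * v ^ S₂` is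
`∏ i ∈ I, ∏ k < N i, c i (Y i k)`. The factor of jump type `i` is a function of the block
`(N i, Y i 0, Y i 1, …)` of the independent family, so the expectation splits over `I`. Within a
block, conditioning on `N i = n` and using the independence of the marks gives `E[m i ^ N i]` with
`m i = E[c i (Y i 0)] = ∑ j, q i j * c i j`, and the Poisson generating function
`E[x ^ N] = exp (-Λ (1 - x))` finishes the computation.

The random variables are not assumed measurable. The Poisson law forces `N i` to be a.e.
measurable; for `Y i k` the outer measures of the fibres `{Y i k = j}` already add up to `1`, which
by Carathéodory's criterion makes every fibre null measurable. One then works with measurable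
modifications, which are still independent.
-/

open MeasureTheory ProbabilityTheory Finset
open scoped NNReal ENNReal

lemma zpow_sum₀ {ι G₀ : Type*} [CommGroupWithZero G₀] {a : G₀} (ha : a ≠ 0) (s : Finset ι)
    (f : ι → ℤ) : a ^ (∑ i ∈ s, f i) = ∏ i ∈ s, a ^ f i := by
  induction s using Finset.cons_induction with
  | empty => simp
  | cons j s hj ih => rw [sum_cons, prod_cons, zpow_add₀ ha, ih]

lemma zpow_mul_zpow_split_sum_eq_prod {u v : ℝ} (hu : u ≠ 0) (hv : v ≠ 0) (I : Finset ℤ)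
    (n : ℤ → ℕ) (y : ℤ → ℕ → ℕ) :
    u ^ (∑ i ∈ I, i.sign * ∑ k ∈ range (n i), (y i k : ℤ)) *
      v ^ (∑ i ∈ I, i.sign * ∑ k ∈ range (n i), ((i.natAbs : ℤ) - y i k)) =
    ∏ i ∈ I, ∏ k ∈ range (n i), u ^ (i.sign * (y i k : ℤ)) * v ^ (i - i.sign * (y i k : ℤ)) := by
  simp only [Finset.mul_sum, zpow_sum₀ hu, zpow_sum₀ hv, ← prod_mul_distrib, mul_sub,
    Int.sign_mul_natAbs]

lemma hasSum_poisson_mul_pow (r : ℝ≥0) (x : ℝ) :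
    HasSum (fun n ↦ Real.exp (-r) * r ^ n / n.factorial * x ^ n) (Real.exp (-(r * (1 - x)))) := by
  have h := (NormedSpace.expSeries_div_hasSum_exp ((r : ℝ) * x)).mul_left (Real.exp (-r))
  rw [← Real.exp_eq_exp_ℝ, ← Real.exp_add] at h
  have hterm : (fun n : ℕ ↦ Real.exp (-r) * r ^ n / n.factorial * x ^ n) =
      fun n ↦ Real.exp (-r) * ((r * x) ^ n / n.factorial) := by
    ext n; rw [mul_pow]; ring
  rwa [hterm, show -(r * (1 - x) : ℝ) = -r + r * x by ring]

lemma lintegral_ofReal_pow_poissonMeasure (r : ℝ≥0) {x : ℝ} (hx : 0 ≤ x) :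
    ∫⁻ n, ENNReal.ofReal x ^ n ∂poissonMeasure r = ENNReal.ofReal (Real.exp (-(r * (1 - x)))) := by
  rw [lintegral_countable', ← (hasSum_poisson_mul_pow r x).tsum_eq,
    ENNReal.ofReal_tsum_of_nonneg (fun n ↦ by positivity) (hasSum_poisson_mul_pow r x).summable]
  refine tsum_congr fun n ↦ ?_
  rw [poissonMeasure_singleton, ← ENNReal.ofReal_pow hx, ← ENNReal.ofReal_mul (by positivity),
    mul_comm]

lemma tsum_ofReal_mul_ofReal_eq_ofReal_sum_range {q g : ℕ → ℝ} {n : ℕ} (hq : ∀ j, 0 ≤ q j)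
    (hsupp : ∀ j, n < j → q j = 0) (hg : ∀ j, 0 ≤ g j) :
    ∑' j, ENNReal.ofReal (g j) * ENNReal.ofReal (q j) =
      ENNReal.ofReal (∑ j ∈ range (n + 1), q j * g j) := by
  rw [tsum_eq_sum (s := range (n + 1)) fun j hj ↦ by simp [hsupp j (by simpa using hj)],
    ENNReal.ofReal_sum_of_nonneg fun j _ ↦ mul_nonneg (hq j) (hg j)]
  exact sum_congr rfl fun j _ ↦ by rw [mul_comm, ENNReal.ofReal_mul (hq j)]

section Measurability

variable {Ω β : Type*} {mΩ : MeasurableSpace Ω} {μ : Measure Ω}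

lemma nullMeasurableSet_of_measure_add_measure_compl_le [IsFiniteMeasure μ] {s : Set Ω}
    (h : μ s + μ sᶜ ≤ μ Set.univ) : NullMeasurableSet s μ := by
  set B := toMeasurable μ s
  set D := toMeasurable μ sᶜ
  have hBD : μ (B ∩ D) = 0 := by
    have hcover : B ∪ D = Set.univ :=
      Set.eq_univ_of_univ_subset fun ω _ ↦ (em (ω ∈ s)).imp
        (subset_toMeasurable μ s ·) (subset_toMeasurable μ sᶜ ·)
    have hsum := measure_union_add_inter (μ := μ) B (measurableSet_toMeasurable μ sᶜ)
    rw [hcover, measure_toMeasurable, measure_toMeasurable] at hsum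
    refine nonpos_iff_eq_zero.1 (ENNReal.le_of_add_le_add_left (measure_ne_top μ Set.univ) ?_)
    rw [hsum, add_zero]
    exact h
  refine (measurableSet_toMeasurable μ s).nullMeasurableSet.congr (ae_eq_set.2 ⟨?_, ?_⟩)
  · exact measure_mono_null
      (fun ω (hω : ω ∈ B \ s) ↦ Set.mem_inter hω.1 (subset_toMeasurable μ sᶜ hω.2)) hBD
  · rw [Set.sdiff_eq_empty.2 (subset_toMeasurable μ s), measure_empty]

lemma aemeasurable_of_tsum_measure_preimage_singleton_le [MeasurableSpace β] [Countable β]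
    [MeasurableSingletonClass β] [IsFiniteMeasure μ] {f : Ω → β}
    (h : ∑' b, μ (f ⁻¹' {b}) ≤ μ Set.univ) : AEMeasurable f μ := by
  classical
  have hfiber (b : β) : NullMeasurableSet (f ⁻¹' {b}) μ := by
    refine nullMeasurableSet_of_measure_add_measure_compl_le (le_trans ?_ h)
    rw [ENNReal.tsum_eq_add_tsum_ite b]
    gcongr
    calc μ (f ⁻¹' {b})ᶜ = μ (⋃ b', if b' = b then ∅ else f ⁻¹' {b'}) := by
          congr 1; ext ω; simp [eq_comm]
      _ ≤ ∑' b', μ (if b' = b then ∅ else f ⁻¹' {b'}) := measure_iUnion_le _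
      _ = ∑' b', if b' = b then 0 else μ (f ⁻¹' {b'}) := by
          congr 1; ext b'; split_ifs <;> simp
  refine NullMeasurable.aemeasurable fun s _ ↦ ?_
  rw [← Set.biUnion_preimage_singleton]
  exact .biUnion s.to_countable fun b _ ↦ hfiber b

lemma lintegral_comp_eq_tsum_mul_measure_preimage [MeasurableSpace β] [Countable β]
    [MeasurableSingletonClass β] {f : Ω → β} (hf : AEMeasurable f μ) (g : β → ℝ≥0∞) :
    ∫⁻ ω, g (f ω) ∂μ = ∑' b, g b * μ (f ⁻¹' {b}) := by
  rw [← lintegral_map' (measurable_of_countable g).aemeasurable hf, lintegral_countable']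
  simp_rw [Measure.map_apply_of_aemeasurable hf (measurableSet_singleton _)]

variable {q : ℕ → ℝ} {n : ℕ} {Y : Ω → ℕ}

lemma aemeasurable_of_measure_fiber_eq_ofReal [IsProbabilityMeasure μ] (hq : ∀ j, 0 ≤ q j)
    (hsupp : ∀ j, n < j → q j = 0) (hsum : ∑ j ∈ range (n + 1), q j = 1)
    (hlaw : ∀ j, μ {ω | Y ω = j} = ENNReal.ofReal (q j)) : AEMeasurable Y μ := by
  refine aemeasurable_of_tsum_measure_preimage_singleton_le (le_of_eq ?_)
  have := tsum_ofReal_mul_ofReal_eq_ofReal_sum_range hq hsupp (g := 1) fun _ ↦ zero_le_one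
  simpa [Set.preimage, hsum, hlaw] using this

lemma lintegral_ofReal_comp_of_measure_fiber_eq_ofReal (hq : ∀ j, 0 ≤ q j)
    (hsupp : ∀ j, n < j → q j = 0) (hlaw : ∀ j, μ {ω | Y ω = j} = ENNReal.ofReal (q j))
    (hY : AEMeasurable Y μ) {g : ℕ → ℝ} (hg : ∀ j, 0 ≤ g j) :
    ∫⁻ ω, ENNReal.ofReal (g (Y ω)) ∂μ = ENNReal.ofReal (∑ j ∈ range (n + 1), q j * g j) := by
  rw [lintegral_comp_eq_tsum_mul_measure_preimage hY fun j ↦ ENNReal.ofReal (g j),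
    ← tsum_ofReal_mul_ofReal_eq_ofReal_sum_range hq hsupp hg]
  simp [Set.preimage, hlaw]

end Measurability

section Compound

variable {Ω : Type*} {mΩ : MeasurableSpace Ω} {μ : Measure Ω}

lemma Measurable.prod_range_comp {N : Ω → ℕ} {Y : ℕ → Ω → ℕ} (hN : Measurable N)
    (hY : ∀ k, Measurable (Y k)) (f : ℕ → ℝ≥0∞) :
    Measurable fun ω ↦ ∏ k ∈ range (N ω), f (Y k ω) := by
  have : Measurable fun p : Ω × ℕ ↦ ∏ k ∈ range p.2, f (Y k p.1) :=
    measurable_from_prod_countable_left fun n ↦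
      Finset.measurable_fun_prod (range n) fun k _ ↦ (measurable_of_countable f).comp (hY k)
  exact this.comp (measurable_id.prodMk hN)

theorem lintegral_prod_range_of_iIndepFun {N : Ω → ℕ} {Y : ℕ → Ω → ℕ} (hN : Measurable N)
    (hY : ∀ k, Measurable (Y k)) (hind : iIndepFun (fun o : Option ℕ ↦ o.elim N Y) μ)
    (f : ℕ → ℝ≥0∞) {m : ℝ≥0∞} (hm : ∀ k, ∫⁻ ω, f (Y k ω) ∂μ = m) :
    ∫⁻ ω, ∏ k ∈ range (N ω), f (Y k ω) ∂μ = ∫⁻ n, m ^ n ∂μ.map N := by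
  have hslice (n : ℕ) :
      ∫⁻ ω, ({n} : Set ℕ).indicator 1 (N ω) * ∏ k ∈ range n, f (Y k ω) ∂μ =
        m ^ n * μ.map N {n} := by
    let g : Option ℕ → ℕ → ℝ≥0∞ := fun o ↦ o.elim (({n} : Set ℕ).indicator 1) fun _ ↦ f
    have := lintegral_prod_eq_prod_lintegral_of_indepFun (insertNone (range n)) _
      (hind.comp g fun o ↦ measurable_of_countable (g o))
      fun o ↦ (measurable_of_countable (g o)).comp (by cases o <;> simp [hN, hY])
    simp only [prod_insertNone, Function.comp_apply, g, Option.elim_none, Option.elim_some, hm,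
      prod_const, card_range] at this
    rw [this, mul_comm, ← lintegral_map (measurable_of_countable _) hN,
      lintegral_indicator_one (measurableSet_singleton n)]
  have hsplit (ω : Ω) : ∏ k ∈ range (N ω), f (Y k ω) =
      ∑' n, ({n} : Set ℕ).indicator 1 (N ω) * ∏ k ∈ range n, f (Y k ω) := by
    rw [tsum_eq_single (N ω) fun n hn ↦ by simp [Ne.symm hn]]
    simp
  have hmeas (n : ℕ) :
      Measurable fun ω ↦ ({n} : Set ℕ).indicator 1 (N ω) * ∏ k ∈ range n, f (Y k ω) :=
    .mul ((measurable_of_countable (({n} : Set ℕ).indicator 1)).comp hN)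
      (Finset.measurable_fun_prod _ fun k _ ↦ (measurable_of_countable f).comp (hY k))
  simp_rw [hsplit]
  rw [lintegral_tsum fun n ↦ (hmeas n).aemeasurable, lintegral_countable']
  simp_rw [hslice]

theorem lintegral_prod_eq_prod_lintegral_of_iIndepFun_blocks {ι κ β : Type*}
    [mβ : MeasurableSpace β] {X : ι → Ω → β} (hX : ∀ i, Measurable (X i)) (hind : iIndepFun X μ)
    (b : ι → κ) {G : κ → Ω → ℝ≥0∞} (hG : ∀ j, Measurable[⨆ i ∈ b ⁻¹' {j}, mβ.comap (X i)] (G j))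
    (s : Finset κ) : ∫⁻ ω, ∏ j ∈ s, G j ω ∂μ = ∏ j ∈ s, ∫⁻ ω, G j ω ∂μ := by
  have := hind.isProbabilityMeasure
  have hle (t : Set ι) : ⨆ i ∈ t, mβ.comap (X i) ≤ mΩ := iSup₂_le fun i _ ↦ (hX i).comap_le
  induction s using Finset.cons_induction with
  | empty => simp
  | cons j s hj ih =>
    simp only [prod_cons, ← ih]
    refine lintegral_mul_eq_lintegral_mul_lintegral_of_independent_measurableSpace (hle _)
      (hle (b ⁻¹' s)) (indep_iSup_of_disjoint (fun i ↦ (hX i).comap_le) hind.iIndep ?_) (hG j)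
      (Finset.measurable_prod s fun j' hj' ↦ (hG j').mono (biSup_mono fun i hi ↦ ?_) le_rfl)
    · exact Disjoint.preimage b (Set.disjoint_singleton_left.2 hj)
    · simp_all

variable {ι : Type*} {N : ι → Ω → ℕ} {Y : ι → ℕ → Ω → ℕ}

theorem lintegral_prod_prod_range_of_iIndepFun [Fintype ι] (hN : ∀ i, Measurable (N i))
    (hY : ∀ i k, Measurable (Y i k))
    (hind : iIndepFun
      (fun (x : ι ⊕ ι × ℕ) ω ↦ Sum.elim (fun i ↦ N i ω) (fun ik ↦ Y ik.1 ik.2 ω) x) μ)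
    (f : ι → ℕ → ℝ≥0∞) {m : ι → ℝ≥0∞} (hm : ∀ i k, ∫⁻ ω, f i (Y i k ω) ∂μ = m i) :
    ∫⁻ ω, ∏ i, ∏ k ∈ range (N i ω), f i (Y i k ω) ∂μ = ∏ i, ∫⁻ n, m i ^ n ∂μ.map (N i) := by
  set X : ι ⊕ ι × ℕ → Ω → ℕ := fun x ω ↦ Sum.elim (fun i ↦ N i ω) (fun ik ↦ Y ik.1 ik.2 ω) x
  let block : ι ⊕ ι × ℕ → ι := Sum.elim id Prod.fst
  have hX_block (x : ι ⊕ ι × ℕ) :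
      Measurable[⨆ y ∈ block ⁻¹' {block x}, MeasurableSpace.comap (X y) inferInstance] (X x) :=
    Measurable.of_comap_le (le_biSup (fun y ↦ MeasurableSpace.comap (X y) inferInstance) rfl)
  refine (lintegral_prod_eq_prod_lintegral_of_iIndepFun_blocks
    (by rintro (i | ⟨i, k⟩) <;> simp [X, hN, hY]) hind block
    (fun i ↦ (hX_block (.inl i)).prod_range_comp (fun k ↦ hX_block (.inr (i, k))) (f i)) univ).trans
    (prod_congr rfl fun i _ ↦ lintegral_prod_range_of_iIndepFun (hN i) (hY i) ?_ (f i) (hm i))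
  let e : Option ℕ → ι ⊕ ι × ℕ := fun o ↦ o.elim (.inl i) fun k ↦ .inr (i, k)
  have he : e.Injective := by rintro (_ | _) (_ | _) h <;> simp_all [e]
  convert hind.precomp he using 1
  ext (_ | _) <;> rfl

theorem lintegral_prod_prod_range_of_iIndepFun₀ (s : Finset ι)
    (hN : ∀ i ∈ s, AEMeasurable (N i) μ) (hY : ∀ i ∈ s, ∀ k, AEMeasurable (Y i k) μ)
    (hind : iIndepFun
      (fun (x : ι ⊕ ι × ℕ) ω ↦ Sum.elim (fun i ↦ N i ω) (fun ik ↦ Y ik.1 ik.2 ω) x) μ)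
    (f : ι → ℕ → ℝ≥0∞) {m : ι → ℝ≥0∞} (hm : ∀ i ∈ s, ∀ k, ∫⁻ ω, f i (Y i k ω) ∂μ = m i) :
    ∫⁻ ω, ∏ i ∈ s, ∏ k ∈ range (N i ω), f i (Y i k ω) ∂μ =
      ∏ i ∈ s, ∫⁻ n, m i ^ n ∂μ.map (N i) := by
  set N' : s → Ω → ℕ := fun i ↦ (hN i i.2).mk
  set Y' : s → ℕ → Ω → ℕ := fun i k ↦ (hY i i.2 k).mk
  have hNN' : ∀ᵐ ω ∂μ, ∀ i : s, N i ω = N' i ω := ae_all_iff.2 fun i ↦ (hN i i.2).ae_eq_mk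
  have hYY' : ∀ᵐ ω ∂μ, ∀ (i : s) k, Y i k ω = Y' i k ω :=
    ae_all_iff.2 fun i ↦ ae_all_iff.2 fun k ↦ (hY i i.2 k).ae_eq_mk
  have hind' : iIndepFun
      (fun (x : s ⊕ s × ℕ) ω ↦ Sum.elim (fun i ↦ N' i ω) (fun ik ↦ Y' ik.1 ik.2 ω) x) μ := by
    refine (hind.precomp (Sum.map_injective.2
      ⟨Subtype.val_injective, Subtype.val_injective.prodMap Function.injective_id⟩)).congr ?_
    rintro (i | ⟨i, k⟩)
    exacts [(hN i i.2).ae_eq_mk, (hY i i.2 k).ae_eq_mk]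
  have hm' (i : s) (k : ℕ) : ∫⁻ ω, f i (Y' i k ω) ∂μ = m i := by
    rw [← hm i i.2 k]
    exact lintegral_congr_ae (hYY'.mono fun ω hω ↦ by simp only [hω])
  calc _ = ∫⁻ ω, ∏ i : ↥s, ∏ k ∈ range (N' i ω), f i (Y' i k ω) ∂μ :=
        lintegral_congr_ae <| (hNN'.and hYY').mono fun ω hω ↦ by
          rw [← prod_coe_sort]; simp only [hω.1, hω.2]
    _ = ∏ i : ↥s, ∫⁻ n, m i ^ n ∂μ.map (N' i) := lintegral_prod_prod_range_of_iIndepFun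
        (fun (i : s) ↦ (hN i i.2).measurable_mk) (fun (i : s) k ↦ (hY i i.2 k).measurable_mk)
        hind' (fun (i : s) ↦ f i) hm'
    _ = _ := (Fintype.prod_congr _ _ fun i ↦ by rw [Measure.map_congr (hN i i.2).ae_eq_mk]).trans
        (prod_coe_sort s fun i ↦ ∫⁻ n, m i ^ n ∂μ.map (N i))

lemma aemeasurable_prod_prod_range (s : Finset ι) (hN : ∀ i ∈ s, AEMeasurable (N i) μ)
    (hY : ∀ i ∈ s, ∀ k, AEMeasurable (Y i k) μ) (f : ι → ℕ → ℝ≥0∞) :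
    AEMeasurable (fun ω ↦ ∏ i ∈ s, ∏ k ∈ range (N i ω), f i (Y i k ω)) μ := by
  refine Finset.aemeasurable_fun_prod s fun i hi ↦ ?_
  have hΦ : Measurable fun p : ℕ × (ℕ → ℕ) ↦ ∏ k ∈ range p.1, f i (p.2 k) :=
    measurable_fst.prod_range_comp (fun k ↦ (measurable_pi_apply k).comp measurable_snd) (f i)
  exact hΦ.comp_aemeasurable ((hN i hi).prodMk (aemeasurable_pi_lambda _ (hY i hi)))

theorem integral_prod_prod_range_of_iIndepFun (s : Finset ι)
    (hN : ∀ i ∈ s, AEMeasurable (N i) μ) (hY : ∀ i ∈ s, ∀ k, AEMeasurable (Y i k) μ)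
    (hind : iIndepFun
      (fun (x : ι ⊕ ι × ℕ) ω ↦ Sum.elim (fun i ↦ N i ω) (fun ik ↦ Y ik.1 ik.2 ω) x) μ)
    {c : ι → ℕ → ℝ} (hc : ∀ i j, 0 ≤ c i j) {m : ι → ℝ}
    (hm : ∀ i ∈ s, ∀ k, ∫⁻ ω, ENNReal.ofReal (c i (Y i k ω)) ∂μ = ENNReal.ofReal (m i)) :
    ∫ ω, ∏ i ∈ s, ∏ k ∈ range (N i ω), c i (Y i k ω) ∂μ =
      ∏ i ∈ s, (∫⁻ n, ENNReal.ofReal (m i) ^ n ∂μ.map (N i)).toReal := by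
  have hprod (ω : Ω) : ∏ i ∈ s, ∏ k ∈ range (N i ω), c i (Y i k ω) =
      (∏ i ∈ s, ∏ k ∈ range (N i ω), ENNReal.ofReal (c i (Y i k ω))).toReal := by
    simp only [ENNReal.toReal_prod, ENNReal.toReal_ofReal (hc _ _)]
  simp only [hprod]
  rw [integral_toReal (aemeasurable_prod_prod_range s hN hY fun i j ↦ ENNReal.ofReal (c i j))
      (ae_of_all _ fun ω ↦
        ENNReal.prod_lt_top fun i _ ↦ ENNReal.prod_lt_top fun k _ ↦ ENNReal.ofReal_lt_top),
    lintegral_prod_prod_range_of_iIndepFun₀ s hN hY hind (fun i j ↦ ENNReal.ofReal (c i j)) hm,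
    ENNReal.toReal_prod]

end Compound

theorem split_skellam_joint_pgf_general
    {Ω : Type*} [MeasurableSpace Ω] (μ : Measure Ω) [IsProbabilityMeasure μ]
    (I : Finset ℤ)
    (Λ : ℤ → ℝ≥0) (N : ℤ → Ω → ℕ) (Y : ℤ → ℕ → Ω → ℕ) (q : ℤ → ℕ → ℝ)
    (hq_nonneg : ∀ i ∈ I, ∀ j, 0 ≤ q i j)
    (hq_supp : ∀ i ∈ I, ∀ j, i.natAbs < j → q i j = 0)
    (hq_sum : ∀ i ∈ I, ∑ j ∈ Finset.range (i.natAbs + 1), q i j = 1)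
    (hlawN : ∀ i ∈ I, μ.map (N i) = poissonMeasure (Λ i))
    (hlawY : ∀ i ∈ I, ∀ k j, μ {ω | Y i k ω = j} = ENNReal.ofReal (q i j))
    (hindep : iIndepFun
      (fun (x : ℤ ⊕ ℤ × ℕ) ω => Sum.elim (fun i => N i ω) (fun ik => Y ik.1 ik.2 ω) x) μ)
    (S₁ S₂ : Ω → ℤ)
    (hS₁ : ∀ ω, S₁ ω = ∑ i ∈ I, i.sign * ∑ k ∈ Finset.range (N i ω), (Y i k ω : ℤ))
    (hS₂ : ∀ ω, S₂ ω = ∑ i ∈ I,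
      i.sign * ∑ k ∈ Finset.range (N i ω), ((i.natAbs : ℤ) - (Y i k ω : ℤ)))
    (u v : ℝ) (hu : 0 < u) (hv : 0 < v) :
    ∫ ω, u ^ (S₁ ω) * v ^ (S₂ ω) ∂μ
      = Real.exp (-∑ i ∈ I, (Λ i : ℝ) *
          (1 - ∑ j ∈ Finset.range (i.natAbs + 1),
            q i j * u ^ (i.sign * (j : ℤ)) * v ^ (i - i.sign * (j : ℤ)))) := by
  set c : ℤ → ℕ → ℝ := fun i j ↦ u ^ (i.sign * (j : ℤ)) * v ^ (i - i.sign * (j : ℤ))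
  set m : ℤ → ℝ := fun i ↦ ∑ j ∈ range (i.natAbs + 1), q i j * c i j
  have hc (i : ℤ) (j : ℕ) : 0 ≤ c i j := by positivity
  have hN (i : ℤ) (hi : i ∈ I) : AEMeasurable (N i) μ :=
    .of_map_ne_zero ((hlawN i hi).trans_ne (NeZero.ne _))
  have hY (i : ℤ) (hi : i ∈ I) (k : ℕ) : AEMeasurable (Y i k) μ :=
    aemeasurable_of_measure_fiber_eq_ofReal (hq_nonneg i hi) (hq_supp i hi) (hq_sum i hi)
      (hlawY i hi k)
  have hmean (i : ℤ) (hi : i ∈ I) (k : ℕ) :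
      ∫⁻ ω, ENNReal.ofReal (c i (Y i k ω)) ∂μ = ENNReal.ofReal (m i) :=
    lintegral_ofReal_comp_of_measure_fiber_eq_ofReal (hq_nonneg i hi) (hq_supp i hi)
      (hlawY i hi k) (hY i hi k) (hc i)
  calc ∫ ω, u ^ S₁ ω * v ^ S₂ ω ∂μ
      = ∫ ω, ∏ i ∈ I, ∏ k ∈ range (N i ω), c i (Y i k ω) ∂μ := by
        simp only [hS₁, hS₂, zpow_mul_zpow_split_sum_eq_prod hu.ne' hv.ne', c]
    _ = ∏ i ∈ I, (∫⁻ n, ENNReal.ofReal (m i) ^ n ∂μ.map (N i)).toReal :=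
        integral_prod_prod_range_of_iIndepFun I hN hY hindep hc hmean
    _ = _ := by
        rw [prod_congr rfl fun i hi ↦ by
          rw [hlawN i hi, lintegral_ofReal_pow_poissonMeasure _
              (sum_nonneg fun j _ ↦ mul_nonneg (hq_nonneg i hi j) (hc i j)),
            ENNReal.toReal_ofReal (Real.exp_pos _).le],
          ← Real.exp_sum, sum_neg_distrib]
        simp only [c, mul_assoc]

/-- Joint probability generating function of the two components of a split generalized
Skellam process: each jump of size `i` is split into `sgn(i)·Y` and `sgn(i)·(|i|−Y)`,
where `Y` has conditional law `q(·; i)` on `{0, …, |i|}`.  Then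
`G(u,v) = exp(−∑_{i∈I} Λᵢ (1 − E[u^{sgn(X)Y} v^{X−sgn(X)Y} | X = i]))`. -/
theorem split_skellam_joint_pgf
    {Ω : Type*} [MeasurableSpace Ω] (μ : Measure Ω) [IsProbabilityMeasure μ]
    (I : Finset ℤ) (hI : (0:ℤ) ∉ I)
    (Λ : ℤ → ℝ≥0) (N : ℤ → Ω → ℕ) (Y : ℤ → ℕ → Ω → ℕ) (q : ℤ → ℕ → ℝ)
    (hq_nonneg : ∀ i ∈ I, ∀ j, 0 ≤ q i j)
    (hq_supp : ∀ i ∈ I, ∀ j, i.natAbs < j → q i j = 0)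
    (hq_sum : ∀ i ∈ I, ∑ j ∈ Finset.range (i.natAbs + 1), q i j = 1)
    (hlawN : ∀ i ∈ I, μ.map (N i) = poissonMeasure (Λ i))
    (hlawY : ∀ i ∈ I, ∀ k j, μ {ω | Y i k ω = j} = ENNReal.ofReal (q i j))
    (hindep : iIndepFun
      (fun (x : ℤ ⊕ ℤ × ℕ) ω => Sum.elim (fun i => N i ω) (fun ik => Y ik.1 ik.2 ω) x) μ)
    (S₁ S₂ : Ω → ℤ)
    (hS₁ : ∀ ω, S₁ ω = ∑ i ∈ I, i.sign * ∑ k ∈ Finset.range (N i ω), (Y i k ω : ℤ))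
    (hS₂ : ∀ ω, S₂ ω = ∑ i ∈ I,
      i.sign * ∑ k ∈ Finset.range (N i ω), ((i.natAbs : ℤ) - (Y i k ω : ℤ)))
    (u v : ℝ) (hu : 0 < u) (hv : 0 < v) :
    ∫ ω, u ^ (S₁ ω) * v ^ (S₂ ω) ∂μ
      = Real.exp (-∑ i ∈ I, (Λ i : ℝ) *
          (1 - ∑ j ∈ Finset.range (i.natAbs + 1),
            q i j * u ^ (i.sign * (j : ℤ)) * v ^ (i - i.sign * (j : ℤ)))) :=
  split_skellam_joint_pgf_general μ I Λ N Y q hq_nonneg hq_supp hq_sum hlawN hlawY hindep S₁ S₂ hS₁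
    hS₂ u v hu hv
end

section
/- Law of large numbers for the generalized Skellam process: let f : [0,∞) → [0,∞) be non-decreasing with f(t) → ∞, and suppose Λ_i(t)/f(t) → μ_i ≥ 0 as t → ∞ for each i ∈ I. Then S(t)/f(t) converges in probability and in L¹ to Σ_{i∈I} i μ_i as t → ∞. -/
open MeasureTheory ProbabilityTheory Filter Finset
open scoped NNReal ENNReal Topology Nat

/-!
A Poisson variable with mean `r` has factorial moments `r ^ k`, so `N / F - b` has second moment
`r / F ^ 2 + (r / F - b) ^ 2`. For `N = Nᵢ(t)`, `F = f(t)`, `b = μᵢ` this tends to `0`, and by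
Jensen so does the `L¹` distance of `Nᵢ(t) / f(t)` to `μᵢ`. The triangle inequality over the finite
set `I` gives `L¹` convergence of `S(t) / f(t)`, and Markov's inequality convergence in probability.
-/

namespace MeasureTheory

theorem tendsto_integral_norm_sum_smul {Ω ι κ E : Type*} [MeasurableSpace Ω] {μ : Measure Ω}
    [NormedAddCommGroup E] [NormedSpace ℝ E] {l : Filter ι} {s : Finset κ} (w : κ → ℝ)
    {Y : κ → ι → Ω → E} (hint : ∀ i ∈ s, ∀ᶠ t in l, Integrable (Y i t) μ)
    (h : ∀ i ∈ s, Tendsto (fun t => ∫ ω, ‖Y i t ω‖ ∂μ) l (𝓝 0)) :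
    Tendsto (fun t => ∫ ω, ‖∑ i ∈ s, w i • Y i t ω‖ ∂μ) l (𝓝 0) := by
  have hbound : ∀ᶠ t in l,
      ∫ ω, ‖∑ i ∈ s, w i • Y i t ω‖ ∂μ ≤ ∑ i ∈ s, ‖w i‖ * ∫ ω, ‖Y i t ω‖ ∂μ := by
    filter_upwards [(eventually_all_finset s).2 hint] with t ht
    have hnorm : ∀ i ∈ s, Integrable (fun ω => ‖w i‖ * ‖Y i t ω‖) μ :=
      fun i hi => (ht i hi).norm.const_mul _
    calc ∫ ω, ‖∑ i ∈ s, w i • Y i t ω‖ ∂μ ≤ ∫ ω, ∑ i ∈ s, ‖w i‖ * ‖Y i t ω‖ ∂μ := by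
          refine integral_mono_of_nonneg (ae_of_all _ fun _ => norm_nonneg _)
            (integrable_finsetSum s hnorm) (ae_of_all _ fun ω => ?_)
          simpa only [norm_smul] using norm_sum_le s fun i => w i • Y i t ω
      _ = ∑ i ∈ s, ‖w i‖ * ∫ ω, ‖Y i t ω‖ ∂μ := by
          rw [integral_finsetSum s hnorm]
          simp_rw [integral_const_mul]
  have hlim := tendsto_finsetSum s fun i hi => (h i hi).const_mul ‖w i‖
  simp only [mul_zero, sum_const_zero] at hlim
  exact squeeze_zero' (Eventually.of_forall fun t => integral_nonneg fun _ => norm_nonneg _)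
    hbound hlim

theorem tendstoInMeasure_of_tendsto_integral_norm_sub {α ι E : Type*} [MeasurableSpace α]
    {μ : Measure α} [IsFiniteMeasure μ] [NormedAddCommGroup E] {l : Filter ι}
    {f : ι → α → E} {g : α → E} (hint : ∀ᶠ i in l, Integrable (fun x => f i x - g x) μ)
    (h : Tendsto (fun i => ∫ x, ‖f i x - g x‖ ∂μ) l (𝓝 0)) : TendstoInMeasure μ f l g := by
  refine tendstoInMeasure_iff_measureReal_norm.mpr fun ε hε => ?_
  refine squeeze_zero' (Eventually.of_forall fun _ => measureReal_nonneg) ?_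
    (by simpa only [zero_div] using h.div_const ε)
  filter_upwards [hint] with i hi
  rw [le_div_iff₀' hε]
  exact mul_meas_ge_le_integral_of_nonneg (ae_of_all _ fun _ => norm_nonneg _) hi.norm ε

end MeasureTheory

namespace ProbabilityTheory

theorem hasSum_poissonMeasure_mul_descFactorial (r : ℝ≥0) (k : ℕ) :
    HasSum (fun n : ℕ => Real.exp (-r) * r ^ n / n ! * (n.descFactorial k : ℝ)) ((r : ℝ) ^ k) := by
  have hshift : ∀ n : ℕ, Real.exp (-r) * r ^ (n + k) / (n + k)! * ((n + k).descFactorial k : ℝ)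
      = r ^ k * (Real.exp (-r) * r ^ n / n !) := by
    intro n
    have h := Nat.factorial_mul_descFactorial (Nat.le_add_left k n)
    rw [Nat.add_sub_cancel] at h
    rw [← h, Nat.cast_mul]
    field_simp
    ring
  have hlow : ∑ n ∈ range k, Real.exp (-r) * r ^ n / n ! * (n.descFactorial k : ℝ) = 0 :=
    sum_eq_zero fun n hn => by
      rw [Nat.descFactorial_eq_zero_iff_lt.mpr (mem_range.mp hn), Nat.cast_zero, mul_zero]
  rw [← hasSum_nat_add_iff' k, hlow, sub_zero]
  simpa only [hshift, mul_one] using (hasSum_one_poissonMeasure r).mul_left ((r : ℝ) ^ k)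

theorem hasSum_poissonMeasure_mul_sq_div_sub (r : ℝ≥0) (F b : ℝ) :
    HasSum (fun n : ℕ => Real.exp (-r) * r ^ n / n ! * ((n : ℝ) / F - b) ^ 2)
      (r / F ^ 2 + (r / F - b) ^ 2) := by
  have h := (((hasSum_poissonMeasure_mul_descFactorial r 2).mul_left (F⁻¹ ^ 2)).add
    ((hasSum_poissonMeasure_mul_descFactorial r 1).mul_left (F⁻¹ ^ 2 - 2 * b * F⁻¹))).add
    ((hasSum_one_poissonMeasure r).mul_left (b ^ 2))
  have hval : (r : ℝ) / F ^ 2 + (r / F - b) ^ 2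
      = F⁻¹ ^ 2 * r ^ 2 + (F⁻¹ ^ 2 - 2 * b * F⁻¹) * r ^ 1 + b ^ 2 * 1 := by ring
  rw [hval]
  refine h.congr_fun fun n => ?_
  rw [Nat.cast_descFactorial_two, Nat.descFactorial_one]
  ring

section HasLaw

variable {Ω : Type*} [MeasurableSpace Ω] {μ : Measure Ω}

theorem hasLaw_of_map_eq {𝓧 : Type*} [MeasurableSpace 𝓧] {X : Ω → 𝓧} {P : Measure 𝓧} [NeZero P]
    (h : μ.map X = P) : HasLaw X P μ where
  aemeasurable := by
    by_contra hX
    rw [Measure.map_of_not_aemeasurable hX] at h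
    exact NeZero.ne P h.symm
  map_eq := h

variable {X : Ω → ℕ} {r : ℝ≥0}

theorem HasLaw.memLp_two_div_sub_of_poissonMeasure (hX : HasLaw X (poissonMeasure r) μ)
    (F b : ℝ) : MemLp (fun ω => (X ω : ℝ) / F - b) 2 μ := by
  have hsq : Integrable (fun n : ℕ => ((n : ℝ) / F - b) ^ 2) (poissonMeasure r) := by
    refine integrable_poissonMeasure_iff.mpr ?_
    simpa only [Real.norm_of_nonneg (sq_nonneg _)]
      using (hasSum_poissonMeasure_mul_sq_div_sub r F b).summable
  refine (memLp_two_iff_integrable_sq ?_).mpr ?_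
  · exact ((Measurable.of_discrete (f := fun n : ℕ => (n : ℝ) / F - b)).comp_aemeasurable
      hX.aemeasurable).aestronglyMeasurable
  · rw [← hX.map_eq] at hsq
    exact hsq.comp_aemeasurable hX.aemeasurable

theorem HasLaw.integral_sq_div_sub_of_poissonMeasure (hX : HasLaw X (poissonMeasure r) μ)
    (F b : ℝ) : ∫ ω, ((X ω : ℝ) / F - b) ^ 2 ∂μ = r / F ^ 2 + (r / F - b) ^ 2 := by
  rw [← (hasSum_poissonMeasure_mul_sq_div_sub r F b).tsum_eq]
  simp_rw [← smul_eq_mul (a := Real.exp _ * _ / _), ← integral_poissonMeasure]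
  exact hX.integral_comp (f := fun n : ℕ => ((n : ℝ) / F - b) ^ 2) .of_discrete

end HasLaw

theorem integral_abs_le_sqrt_integral_sq {Ω : Type*} [MeasurableSpace Ω] {μ : Measure Ω}
    [IsProbabilityMeasure μ] {Y : Ω → ℝ} (hY : MemLp Y 2 μ) :
    ∫ ω, |Y ω| ∂μ ≤ √(∫ ω, Y ω ^ 2 ∂μ) := by
  have hvar := variance_nonneg |Y| μ
  rw [variance_eq_sub hY.abs] at hvar
  refine Real.le_sqrt_of_sq_le ?_
  simpa only [Pi.pow_apply, Pi.abs_apply, sq_abs, sub_nonneg] using hvar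

theorem tendsto_integral_abs_div_sub_of_hasLaw_poissonMeasure {Ω ι : Type*} [MeasurableSpace Ω]
    {μ : Measure Ω} [IsProbabilityMeasure μ] {l : Filter ι} {X : ι → Ω → ℕ} {r : ι → ℝ≥0}
    {F : ι → ℝ} {m : ℝ} (hX : ∀ᶠ t in l, HasLaw (X t) (poissonMeasure (r t)) μ)
    (hF : Tendsto F l atTop) (hr : Tendsto (fun t => (r t : ℝ) / F t) l (𝓝 m)) :
    Tendsto (fun t => ∫ ω, |(X t ω : ℝ) / F t - m| ∂μ) l (𝓝 0) := by
  have hmoment : Tendsto (fun t => (r t : ℝ) / F t ^ 2 + (r t / F t - m) ^ 2) l (𝓝 0) := by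
    have h := (hr.mul hF.inv_tendsto_atTop).add ((hr.sub_const m).pow 2)
    rw [mul_zero, sub_self, zero_add, zero_pow two_ne_zero] at h
    exact h.congr fun t => by rw [Pi.inv_apply]; ring
  have hsqrt := hmoment.sqrt
  rw [Real.sqrt_zero] at hsqrt
  refine squeeze_zero' (Eventually.of_forall fun t => integral_nonneg fun _ => abs_nonneg _)
    ?_ hsqrt
  filter_upwards [hX] with t ht
  calc ∫ ω, |(X t ω : ℝ) / F t - m| ∂μ ≤ √(∫ ω, ((X t ω : ℝ) / F t - m) ^ 2 ∂μ) :=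
        integral_abs_le_sqrt_integral_sq (ht.memLp_two_div_sub_of_poissonMeasure _ _)
    _ = √((r t : ℝ) / F t ^ 2 + (r t / F t - m) ^ 2) := by
        rw [ht.integral_sq_div_sub_of_poissonMeasure]

end ProbabilityTheory

theorem generalized_skellam_lln_general
    {Ω : Type*} [MeasurableSpace Ω] (μ : Measure Ω) [IsProbabilityMeasure μ]
    (I : Finset ℝ)
    (Λ : ℝ → ℝ → ℝ≥0) (N : ℝ → Ω → ℝ → ℕ)
    (hlaw : ∀ i ∈ I, ∀ t : ℝ, 0 ≤ t →
      μ.map (fun ω => N i ω t) = poissonMeasure (Λ i t))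
    (S : Ω → ℝ → ℝ) (hS : ∀ ω t, S ω t = ∑ i ∈ I, i * (N i ω t : ℝ))
    (f : ℝ → ℝ)
    (hf_top : Tendsto f atTop atTop)
    (m : ℝ → ℝ)
    (hconv : ∀ i ∈ I, Tendsto (fun t => (Λ i t : ℝ) / f t) atTop (𝓝 (m i))) :
    TendstoInMeasure μ (fun t ω => S ω t / f t) atTop
        (fun _ => ∑ i ∈ I, i * m i) ∧
      Tendsto (fun t => ∫ ω, |S ω t / f t - ∑ i ∈ I, i * m i| ∂μ) atTop (𝓝 0) := by
  have hN : ∀ i ∈ I, ∀ᶠ t in atTop, HasLaw (fun ω => N i ω t) (poissonMeasure (Λ i t)) μ :=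
    fun i hi => (eventually_ge_atTop 0).mono fun t ht => hasLaw_of_map_eq (hlaw i hi t ht)
  have hint : ∀ i ∈ I, ∀ᶠ t in atTop, Integrable (fun ω => (N i ω t : ℝ) / f t - m i) μ :=
    fun i hi => (hN i hi).mono fun t ht =>
      (ht.memLp_two_div_sub_of_poissonMeasure _ _).integrable one_le_two
  have hdecomp : ∀ t ω, S ω t / f t - ∑ i ∈ I, i * m i
      = ∑ i ∈ I, i • ((N i ω t : ℝ) / f t - m i) := fun t ω => by
    simp only [hS, sum_div, ← sum_sub_distrib, smul_eq_mul, mul_sub, mul_div_assoc]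
  have hcomponent : ∀ i ∈ I,
      Tendsto (fun t => ∫ ω, |(N i ω t : ℝ) / f t - m i| ∂μ) atTop (𝓝 0) := fun i hi =>
    tendsto_integral_abs_div_sub_of_hasLaw_poissonMeasure (hN i hi) hf_top (hconv i hi)
  have hL1 : Tendsto (fun t => ∫ ω, |S ω t / f t - ∑ i ∈ I, i * m i| ∂μ) atTop (𝓝 0) := by
    simpa only [hdecomp, Real.norm_eq_abs, id]
      using tendsto_integral_norm_sum_smul id hint hcomponent
  refine ⟨tendstoInMeasure_of_tendsto_integral_norm_sub ?_ (by simpa only [Real.norm_eq_abs]), hL1⟩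
  filter_upwards [(eventually_all_finset I).2 hint] with t ht
  simp only [hdecomp]
  exact integrable_finsetSum I fun i hi => (ht i hi).const_mul i

/-- Law of large numbers for the generalized Skellam process: if `f` is nondecreasing,
`f(t) → ∞` and `Λᵢ(t)/f(t) → μᵢ ≥ 0` for each `i ∈ I`, then `S(t)/f(t)` converges in
probability and in `L¹` to `∑_{i∈I} i μᵢ` as `t → ∞`. -/
theorem generalized_skellam_lln
    {Ω : Type*} [MeasurableSpace Ω] (μ : Measure Ω) [IsProbabilityMeasure μ]
    (I : Finset ℝ) (hI : ∀ i ∈ I, i ≠ 0)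
    (Λ : ℝ → ℝ → ℝ≥0) (N : ℝ → Ω → ℝ → ℕ)
    (hlaw : ∀ i ∈ I, ∀ t : ℝ, 0 ≤ t →
      μ.map (fun ω => N i ω t) = poissonMeasure (Λ i t))
    (hindep : ∀ t : ℝ, 0 ≤ t →
      iIndepFun (fun i ω => N i ω t) μ)
    (S : Ω → ℝ → ℝ) (hS : ∀ ω t, S ω t = ∑ i ∈ I, i * (N i ω t : ℝ))
    (f : ℝ → ℝ) (hf_nonneg : ∀ t, 0 ≤ f t) (hf_mono : MonotoneOn f (Set.Ici 0))
    (hf_top : Tendsto f atTop atTop)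
    (m : ℝ → ℝ) (hm : ∀ i ∈ I, 0 ≤ m i)
    (hconv : ∀ i ∈ I, Tendsto (fun t => (Λ i t : ℝ) / f t) atTop (𝓝 (m i))) :
    TendstoInMeasure μ (fun t ω => S ω t / f t) atTop
        (fun _ => ∑ i ∈ I, i * m i) ∧
      Tendsto (fun t => ∫ ω, |S ω t / f t - ∑ i ∈ I, i * m i| ∂μ) atTop (𝓝 0) :=
  generalized_skellam_lln_general μ I Λ N hlaw S hS f hf_top m hconv
end
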